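/- arXiv:1712.01085 — 4 statements merged into one kernel-verified Lean document; each statement's English description precedes it below -/
import Mathlib

section
/- For solutions of the centralized herding model, the covariance C(X,V)(t) = ∑_i x̂_i·v̂_i satisfies d/dt C(X,V) = V(t) - λ_w X(t) - (λ_x/2) X_φ(t) - (λ_v/2) C_φ(X,V)(t), where X_φ = (1/N)∑_{i,j} φ̂_ij |x̂_i - x̂_j|². -/
/-! The derivative of `∑ ⟪x̂ᵢ, v̂ᵢ⟫` is `∑ ‖v̂ᵢ‖² + ∑ ⟪x̂ᵢ, v̂ᵢ'⟫` by the product rule. In the second sum the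
damping term gives `-λ_w X`, and each alignment term has the form `∑ᵢ ⟪aᵢ, ∑ⱼ φᵢⱼ (bⱼ - bᵢ)⟫`; since `φ` is
symmetric, averaging this double sum with its `i ↔ j` swap turns it into `-½ ∑ᵢⱼ φᵢⱼ ⟪aᵢ - aⱼ, bᵢ - bⱼ⟫`. -/

open scoped BigOperators RealInnerProductSpace

open Finset

theorem sum_inner_sum_smul_sub_of_symm {ι E : Type*} [Fintype ι]
    [NormedAddCommGroup E] [InnerProductSpace ℝ E]
    (c : ι → ι → ℝ) (hc : ∀ i j, c i j = c j i) (a b : ι → E) :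
    ∑ i, ⟪a i, ∑ j, c i j • (b j - b i)⟫ =
      -(1 / 2) * ∑ i, ∑ j, c i j * ⟪a i - a j, b i - b j⟫ := by
  set S := ∑ i, ⟪a i, ∑ j, c i j • (b j - b i)⟫
  have hS : S = ∑ i, ∑ j, c i j * ⟪a i, b j - b i⟫ := by
    simp only [S, inner_sum, real_inner_smul_right]
  have hS_swap : S = ∑ i, ∑ j, c i j * ⟪a j, b i - b j⟫ := by
    rw [hS, sum_comm]
    exact sum_congr rfl fun i _ => sum_congr rfl fun j _ => by rw [hc]
  have hS_double : S + S = -∑ i, ∑ j, c i j * ⟪a i - a j, b i - b j⟫ := by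
    nth_rewrite 2 [hS_swap]
    rw [hS]
    simp only [← sum_add_distrib, ← sum_neg_distrib, ← mul_add, ← mul_neg]
    refine sum_congr rfl fun i _ => sum_congr rfl fun j _ => ?_
    simp only [inner_sub_left, inner_sub_right]
    ring
  linarith

theorem C_deriv_general (N M : ℕ)
    (x v : Fin N → ℝ → EuclideanSpace ℝ (Fin M))
    (φ : Fin N → Fin N → ℝ → ℝ) (hφ : ∀ i j t, φ i j t = φ j i t)
    (lx lv lw : ℝ) (t : ℝ)
    (hx : ∀ i, HasDerivAt (x i) (v i t) t)
    (hv : ∀ i, HasDerivAt (v i)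
      ((lx / N) • ∑ j, φ i j t • (x j t - x i t)
        + (lv / N) • ∑ j, φ i j t • (v j t - v i t)
        - lw • x i t) t) :
    HasDerivAt (fun s => ∑ i, ⟪x i s, v i s⟫)
      ((∑ i, ‖v i t‖ ^ 2) - lw * ∑ i, ‖x i t‖ ^ 2
        - (lx / 2) * ((1 / (N : ℝ)) * ∑ i, ∑ j, φ i j t * ‖x i t - x j t‖ ^ 2)
        - (lv / 2) * ((1 / (N : ℝ)) * ∑ i, ∑ j, φ i j t * ⟪x i t - x j t, v i t - v j t⟫)) t := by
  refine (HasDerivAt.fun_sum fun i _ => (hx i).inner ℝ (hv i)).congr_deriv ?_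
  have hsymm (b : Fin N → EuclideanSpace ℝ (Fin M)) :=
    sum_inner_sum_smul_sub_of_symm (fun i j => φ i j t) (fun i j => hφ i j t) (fun i => x i t) b
  conv_lhs => simp only [inner_sub_right, inner_add_right, real_inner_smul_right,
    sum_add_distrib, sum_sub_distrib, ← mul_sum]
  rw [hsymm, hsymm]
  simp only [real_inner_self_eq_norm_sq]
  ring

theorem C_deriv (N M : ℕ) (hN : 0 < N)
    (x v : Fin N → ℝ → EuclideanSpace ℝ (Fin M))
    (φ : Fin N → Fin N → ℝ → ℝ) (hφ : ∀ i j t, φ i j t = φ j i t)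
    (lx lv lw : ℝ) (t : ℝ)
    (hx : ∀ i, HasDerivAt (x i) (v i t) t)
    (hv : ∀ i, HasDerivAt (v i)
      ((lx / N) • ∑ j, φ i j t • (x j t - x i t)
        + (lv / N) • ∑ j, φ i j t • (v j t - v i t)
        - lw • x i t) t) :
    HasDerivAt (fun s => ∑ i, ⟪x i s, v i s⟫)
      ((∑ i, ‖v i t‖ ^ 2) - lw * ∑ i, ‖x i t‖ ^ 2
        - (lx / 2) * ((1 / (N : ℝ)) * ∑ i, ∑ j, φ i j t * ‖x i t - x j t‖ ^ 2)
        - (lv / 2) * ((1 / (N : ℝ)) * ∑ i, ∑ j, φ i j t * ⟪x i t - x j t, v i t - v j t⟫)) t :=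
  C_deriv_general N M x v φ hφ lx lv lw t hx hv
end

section
/- For solutions of the centralized herding model with φ̂_ij = (1+|x̂_i-x̂_j|²)^{-γ/2} and any λ_x, λ_v, λ_w > 0, the energy E₂(t) = λ_w ∑|x̂_i|² + ∑|v̂_i|² + (λ_x/β_γ) S_γ(t) satisfies E₂'(t) = -λ_v V_φ(t) ≤ 0; in particular E₂ is non-increasing. -/
/-!
Differentiating the energy, the confinement contributions `± 2 λ_w ⟨x_i, v_i⟩` cancel. The pair
term `P` of `S_γ` satisfies `P'(r) = (β_γ / 2) (1 + r)^(-γ/2)` in the squared distance `r`, so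
`(λ_x / β_γ) S_γ'` equals `(λ_x / N) ∑ φ_ij ⟨x_i - x_j, v_i - v_j⟩`; since `φ` is symmetric,
swapping `i ↔ j` turns the position-alignment force term into exactly minus this.
The same swap turns the velocity-alignment term into `-λ_v V_φ ≤ 0`.
-/

open scoped BigOperators RealInnerProductSpace

/-- The pair term of `S_γ`, as a function of the squared distance `r`. -/
noncomputable def herdingPotential (γ r : ℝ) : ℝ :=
  if γ < 2 then (1 + r) ^ (-((γ - 2) / 2)) - 1
  else if γ = 2 then Real.log (1 + r)
  else 1 - (1 + r) ^ (-((γ - 2) / 2))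

noncomputable def herdingBeta (γ : ℝ) : ℝ := if γ = 2 then 2 else |2 - γ|

theorem herdingBeta_ne_zero (γ : ℝ) : herdingBeta γ ≠ 0 := by
  unfold herdingBeta
  split_ifs with h
  · norm_num
  · exact abs_ne_zero.mpr (sub_ne_zero.mpr (Ne.symm h))

theorem hasDerivAt_herdingPotential (γ : ℝ) {r : ℝ} (hr : -1 < r) :
    HasDerivAt (herdingPotential γ) (herdingBeta γ / 2 * (1 + r) ^ (-(γ / 2))) r := by
  have hpos : 0 < 1 + r := by linarith
  have hbase : HasDerivAt (fun r : ℝ => 1 + r) 1 r := (hasDerivAt_id r).const_add 1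
  have hexp : -((γ - 2) / 2) - 1 = -(γ / 2) := by ring
  unfold herdingPotential herdingBeta
  rcases lt_trichotomy γ 2 with h | rfl | h
  · simp only [if_pos h, if_neg h.ne]
    refine ((hbase.rpow_const (Or.inl hpos.ne')).sub_const 1).congr_deriv ?_
    rw [hexp, abs_of_pos (sub_pos.mpr h)]
    ring
  · simp only [lt_irrefl, if_false, if_true]
    refine (hbase.log hpos.ne').congr_deriv ?_
    rw [show -((2 : ℝ) / 2) = -1 by norm_num, Real.rpow_neg_one]
    ring
  · simp only [if_neg h.not_gt, if_neg h.ne']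
    refine ((hbase.rpow_const (Or.inl hpos.ne')).const_sub 1).congr_deriv ?_
    rw [hexp, abs_of_neg (sub_neg.mpr h)]
    ring

section InnerProductSpace

variable {E : Type*} [NormedAddCommGroup E] [InnerProductSpace ℝ E]

theorem HasDerivAt.herdingPotential_norm_sq (γ : ℝ) {u : ℝ → E} {u' : E} {t : ℝ}
    (hu : HasDerivAt u u' t) :
    HasDerivAt (fun s => herdingPotential γ (‖u s‖ ^ 2))
      (herdingBeta γ * ((1 + ‖u t‖ ^ 2) ^ (-(γ / 2)) * ⟪u t, u'⟫)) t := by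
  have hr : -1 < ‖u t‖ ^ 2 := by linarith [sq_nonneg ‖u t‖]
  refine ((hasDerivAt_herdingPotential γ hr).comp t hu.norm_sq).congr_deriv ?_
  ring

variable {ι : Type*} [Fintype ι]

theorem two_mul_sum_sum_inner_sub_of_symm (w : ι → ι → ℝ) (hw : ∀ i j, w i j = w j i)
    (V Y : ι → E) :
    2 * ∑ i, ∑ j, w i j * ⟪V i, Y j - Y i⟫ = -∑ i, ∑ j, w i j * ⟪V i - V j, Y i - Y j⟫ := by
  have hswap : ∑ i, ∑ j, w i j * ⟪V i, Y j - Y i⟫ = ∑ i, ∑ j, w i j * ⟪V j, Y i - Y j⟫ := by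
    rw [Finset.sum_comm]
    simp only [hw]
  rw [two_mul]
  nth_rw 2 [hswap]
  simp only [← Finset.sum_add_distrib, ← Finset.sum_neg_distrib]
  refine Finset.sum_congr rfl fun i _ => Finset.sum_congr rfl fun j _ => ?_
  simp only [inner_sub_left, inner_sub_right]
  ring

theorem herding_energy_identity (n lx lv lw β : ℝ) (hβ : β ≠ 0) (w : ι → ι → ℝ)
    (hw : ∀ i j, w i j = w j i) (X V : ι → E) :
    lw * ∑ i, 2 * ⟪X i, V i⟫
        + ∑ i, 2 * ⟪V i, (lx / n) • ∑ j, w i j • (X j - X i)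
            + (lv / n) • ∑ j, w i j • (V j - V i) - lw • X i⟫
        + lx / β * (1 / n * ∑ i, ∑ j, β * (w i j * ⟪X i - X j, V i - V j⟫))
      = -(lv * (1 / n * ∑ i, ∑ j, w i j * ‖V i - V j‖ ^ 2)) := by
  have hfield : ∀ i, 2 * ⟪V i, (lx / n) • ∑ j, w i j • (X j - X i)
        + (lv / n) • ∑ j, w i j • (V j - V i) - lw • X i⟫
      = lx / n * (2 * ∑ j, w i j * ⟪V i, X j - X i⟫)
        + lv / n * (2 * ∑ j, w i j * ⟪V i, V j - V i⟫) - 2 * lw * ⟪X i, V i⟫ := by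
    intro i
    simp only [inner_sub_right, inner_add_right, inner_sum, real_inner_smul_right,
      real_inner_comm (X i) (V i)]
    ring
  have hpos : ∑ i, ∑ j, w i j * ⟪X i - X j, V i - V j⟫
      = ∑ i, ∑ j, w i j * ⟪V i - V j, X i - X j⟫ := by
    simp only [real_inner_comm (X _ - X _)]
  have hvel : ∑ i, ∑ j, w i j * ‖V i - V j‖ ^ 2
      = ∑ i, ∑ j, w i j * ⟪V i - V j, V i - V j⟫ := by
    simp only [real_inner_self_eq_norm_sq]
  simp only [Finset.sum_congr rfl fun i _ => hfield i, Finset.sum_sub_distrib,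
    Finset.sum_add_distrib, ← Finset.mul_sum]
  rw [two_mul_sum_sum_inner_sub_of_symm w hw, two_mul_sum_sum_inner_sub_of_symm w hw, hpos, hvel]
  field_simp
  ring

end InnerProductSpace

theorem E2_monotone_general (N M : ℕ) (γ lx lv lw : ℝ)
    (hlv : 0 < lv)
    (x v : Fin N → ℝ → EuclideanSpace ℝ (Fin M))
    (φ : Fin N → Fin N → ℝ → ℝ)
    (hφdef : ∀ i j s, φ i j s = (1 + ‖x i s - x j s‖ ^ 2) ^ (-(γ / 2)))
    (hx : ∀ i (s : ℝ), HasDerivAt (x i) (v i s) s)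
    (hv : ∀ i (s : ℝ), HasDerivAt (v i)
      ((lx / N) • ∑ j, φ i j s • (x j s - x i s)
        + (lv / N) • ∑ j, φ i j s • (v j s - v i s)
        - lw • x i s) s) :
    (∀ t : ℝ,
      HasDerivAt
        (fun s => lw * ∑ i, ‖x i s‖ ^ 2 + ∑ i, ‖v i s‖ ^ 2
          + (lx / (if γ = 2 then 2 else |2 - γ|)) *
            ((1 / (N : ℝ)) * ∑ i, ∑ j,
              (if γ < 2 then (1 + ‖x i s - x j s‖ ^ 2) ^ (-((γ - 2) / 2)) - 1
               else if γ = 2 then Real.log (1 + ‖x i s - x j s‖ ^ 2)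
               else 1 - (1 + ‖x i s - x j s‖ ^ 2) ^ (-((γ - 2) / 2)))))
        (-(lv * ((1 / (N : ℝ)) * ∑ i, ∑ j, φ i j t * ‖v i t - v j t‖ ^ 2))) t
      ∧ -(lv * ((1 / (N : ℝ)) * ∑ i, ∑ j, φ i j t * ‖v i t - v j t‖ ^ 2)) ≤ 0)
    ∧ Antitone
        (fun s => lw * ∑ i, ‖x i s‖ ^ 2 + ∑ i, ‖v i s‖ ^ 2
          + (lx / (if γ = 2 then 2 else |2 - γ|)) *
            ((1 / (N : ℝ)) * ∑ i, ∑ j,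
              (if γ < 2 then (1 + ‖x i s - x j s‖ ^ 2) ^ (-((γ - 2) / 2)) - 1
               else if γ = 2 then Real.log (1 + ‖x i s - x j s‖ ^ 2)
               else 1 - (1 + ‖x i s - x j s‖ ^ 2) ^ (-((γ - 2) / 2))))) := by
  have hφsymm : ∀ t i j, φ i j t = φ j i t := fun t i j => by
    rw [hφdef, hφdef, norm_sub_rev]
  have hderiv : ∀ t, HasDerivAt
      (fun s => lw * ∑ i, ‖x i s‖ ^ 2 + ∑ i, ‖v i s‖ ^ 2
        + lx / herdingBeta γ * (1 / (N : ℝ) * ∑ i, ∑ j, herdingPotential γ (‖x i s - x j s‖ ^ 2)))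
      (-(lv * ((1 / (N : ℝ)) * ∑ i, ∑ j, φ i j t * ‖v i t - v j t‖ ^ 2))) t := fun t => by
    have hpair : ∀ i j, HasDerivAt (fun s => herdingPotential γ (‖x i s - x j s‖ ^ 2))
        (herdingBeta γ * (φ i j t * ⟪x i t - x j t, v i t - v j t⟫)) t := fun i j => by
      rw [hφdef]
      exact ((hx i t).sub (hx j t)).herdingPotential_norm_sq γ
    have H := (((HasDerivAt.fun_sum (u := .univ) fun i _ => (hx i t).norm_sq).const_mul lw).add
      (HasDerivAt.fun_sum (u := .univ) fun i _ => (hv i t).norm_sq)).add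
      (((HasDerivAt.fun_sum (u := .univ) fun i _ =>
        HasDerivAt.fun_sum (u := .univ) fun j _ => hpair i j).const_mul
          (1 / (N : ℝ))).const_mul (lx / herdingBeta γ))
    rwa [herding_energy_identity _ _ _ _ _ (herdingBeta_ne_zero γ) _ (hφsymm t)] at H
  have hdiss : ∀ t, -(lv * ((1 / (N : ℝ)) * ∑ i, ∑ j, φ i j t * ‖v i t - v j t‖ ^ 2)) ≤ 0 :=
    fun t => by
      have hφnonneg : ∀ i j, 0 ≤ φ i j t := fun i j => by
        rw [hφdef]
        positivity
      have : 0 ≤ ∑ i, ∑ j, φ i j t * ‖v i t - v j t‖ ^ 2 :=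
        Finset.sum_nonneg fun i _ => Finset.sum_nonneg fun j _ =>
          mul_nonneg (hφnonneg i j) (sq_nonneg _)
      have := mul_nonneg hlv.le (mul_nonneg (by positivity : (0 : ℝ) ≤ 1 / (N : ℝ)) this)
      linarith
  exact ⟨fun t => ⟨hderiv t, hdiss t⟩, antitone_of_hasDerivAt_nonpos hderiv hdiss⟩

theorem E2_monotone (N M : ℕ) (hN : 0 < N) (γ lx lv lw : ℝ)
    (hγ : 0 < γ) (hlx : 0 < lx) (hlv : 0 < lv) (hlw : 0 < lw)
    (x v : Fin N → ℝ → EuclideanSpace ℝ (Fin M))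
    (φ : Fin N → Fin N → ℝ → ℝ)
    (hφdef : ∀ i j s, φ i j s = (1 + ‖x i s - x j s‖ ^ 2) ^ (-(γ / 2)))
    (hx : ∀ i (s : ℝ), HasDerivAt (x i) (v i s) s)
    (hv : ∀ i (s : ℝ), HasDerivAt (v i)
      ((lx / N) • ∑ j, φ i j s • (x j s - x i s)
        + (lv / N) • ∑ j, φ i j s • (v j s - v i s)
        - lw • x i s) s) :
    (∀ t : ℝ,
      HasDerivAt
        (fun s => lw * ∑ i, ‖x i s‖ ^ 2 + ∑ i, ‖v i s‖ ^ 2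
          + (lx / (if γ = 2 then 2 else |2 - γ|)) *
            ((1 / (N : ℝ)) * ∑ i, ∑ j,
              (if γ < 2 then (1 + ‖x i s - x j s‖ ^ 2) ^ (-((γ - 2) / 2)) - 1
               else if γ = 2 then Real.log (1 + ‖x i s - x j s‖ ^ 2)
               else 1 - (1 + ‖x i s - x j s‖ ^ 2) ^ (-((γ - 2) / 2)))))
        (-(lv * ((1 / (N : ℝ)) * ∑ i, ∑ j, φ i j t * ‖v i t - v j t‖ ^ 2))) t
      ∧ -(lv * ((1 / (N : ℝ)) * ∑ i, ∑ j, φ i j t * ‖v i t - v j t‖ ^ 2)) ≤ 0)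
    ∧ Antitone
        (fun s => lw * ∑ i, ‖x i s‖ ^ 2 + ∑ i, ‖v i s‖ ^ 2
          + (lx / (if γ = 2 then 2 else |2 - γ|)) *
            ((1 / (N : ℝ)) * ∑ i, ∑ j,
              (if γ < 2 then (1 + ‖x i s - x j s‖ ^ 2) ^ (-((γ - 2) / 2)) - 1
               else if γ = 2 then Real.log (1 + ‖x i s - x j s‖ ^ 2)
               else 1 - (1 + ‖x i s - x j s‖ ^ 2) ^ (-((γ - 2) / 2))))) :=
  E2_monotone_general N M γ lx lv lw hlv x v φ hφdef hx hv
end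

section
/- Suppose at time t all v̂_i are equal (hence, since ∑ v̂_i = 0, all zero) but the x̂_i are not all equal. Then there exist indices i₀ ≠ j₀ and a coordinate d such that v̂_i₀'^d - v̂_j₀'^d > 0, where v̂_i' = (λ_x/N)∑_k φ̂_ik(x̂_k - x̂_i) - λ_w x̂_i; indeed one may take i₀ attaining the minimum and j₀ attaining the maximum of the d-th coordinates of the x̂_i, for any coordinate d where not all values coincide. -/
/-!
At a coordinate `d` where the positions differ, the particle `i₀` minimising `x · d` only feels
attraction towards larger values and `j₀` maximising it only towards smaller ones, so the
alignment drift of `i₀` is `≥ 0` and that of `j₀` is `≤ 0`. The damping term `-λ_w x` then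
makes the gap strict, since `x i₀ d < x j₀ d`.
-/

open Finset

section Drift

variable {ι : Type*} [Fintype ι]

lemma exists_argmin_argmax_lt_of_ne {f : ι → ℝ} {i j : ι} (hij : f i ≠ f j) :
    ∃ i₀ j₀, (∀ k, f i₀ ≤ f k) ∧ (∀ k, f k ≤ f j₀) ∧ f i₀ < f j₀ := by
  have : Nonempty ι := ⟨i⟩
  obtain ⟨i₀, hmin⟩ := Finite.exists_min f
  obtain ⟨j₀, hmax⟩ := Finite.exists_max f
  refine ⟨i₀, j₀, hmin, hmax, ?_⟩
  rcases hij.lt_or_gt with h | h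
  · linarith [hmin i, hmax j]
  · linarith [hmin j, hmax i]

lemma weighted_drift_nonneg_of_isMin {w : ι → ℝ} {f : ι → ℝ} {a : ι}
    (hw : ∀ k, 0 ≤ w k) (hmin : ∀ k, f a ≤ f k) : 0 ≤ ∑ k, w k * (f k - f a) :=
  sum_nonneg fun k _ => mul_nonneg (hw k) (sub_nonneg.mpr (hmin k))

lemma weighted_drift_nonpos_of_isMax {w : ι → ℝ} {f : ι → ℝ} {a : ι}
    (hw : ∀ k, 0 ≤ w k) (hmax : ∀ k, f k ≤ f a) : ∑ k, w k * (f k - f a) ≤ 0 :=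
  sum_nonpos fun k _ => mul_nonpos_of_nonneg_of_nonpos (hw k) (sub_nonpos.mpr (hmax k))

lemma damped_drift_gap_pos {w : ι → ι → ℝ} {f : ι → ℝ} {c μ : ℝ} {i₀ j₀ : ι}
    (hc : 0 ≤ c) (hμ : 0 < μ) (hw : ∀ a k, 0 ≤ w a k)
    (hmin : ∀ k, f i₀ ≤ f k) (hmax : ∀ k, f k ≤ f j₀) (hlt : f i₀ < f j₀) :
    0 < (c * ∑ k, w i₀ k * (f k - f i₀) - μ * f i₀)
      - (c * ∑ k, w j₀ k * (f k - f j₀) - μ * f j₀) := by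
  have hi₀ := mul_nonneg hc (weighted_drift_nonneg_of_isMin (hw i₀) hmin)
  have hj₀ := mul_nonpos_of_nonneg_of_nonpos hc (weighted_drift_nonpos_of_isMax (hw j₀) hmax)
  nlinarith [mul_lt_mul_of_pos_left hlt hμ]

end Drift

lemma EuclideanSpace.damped_drift_apply {ι n : Type*} [Fintype ι]
    (x : ι → EuclideanSpace ℝ n) (w : ι → ι → ℝ) (c μ : ℝ) (a : ι) (d : n) :
    (c • ∑ k, w a k • (x k - x a) - μ • x a) d
      = c * ∑ k, w a k * (x k d - x a d) - μ * x a d := by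
  simp [WithLp.ofLp_sum, Finset.sum_apply]

theorem exists_strict_velocity_gap_general (N M : ℕ) (γ lx lw : ℝ)
    (hlx : 0 < lx) (hlw : 0 < lw)
    (x : Fin N → EuclideanSpace ℝ (Fin M))
    (φ : Fin N → Fin N → ℝ)
    (hφdef : ∀ i k, φ i k = (1 + ‖x i - x k‖ ^ 2) ^ (-(γ / 2)))
    (hne : ∃ i j, x i ≠ x j) :
    ∃ (i₀ j₀ : Fin N) (d : Fin M), i₀ ≠ j₀ ∧
      (∀ i, x i₀ d ≤ x i d) ∧ (∀ i, x i d ≤ x j₀ d) ∧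
      0 < ((lx / N) • ∑ k, φ i₀ k • (x k - x i₀) - lw • x i₀) d
          - ((lx / N) • ∑ k, φ j₀ k • (x k - x j₀) - lw • x j₀) d := by
  obtain ⟨i, j, hij⟩ := hne
  obtain ⟨d, hd⟩ : ∃ d, x i d ≠ x j d := by
    by_contra! h
    exact hij (PiLp.ext h)
  obtain ⟨i₀, j₀, hmin, hmax, hlt⟩ := exists_argmin_argmax_lt_of_ne (f := fun k => x k d) hd
  have hφ : ∀ a k, 0 ≤ φ a k := fun a k => hφdef a k ▸ by positivity
  refine ⟨i₀, j₀, d, fun h => (h ▸ hlt).false, hmin, hmax, ?_⟩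
  rw [EuclideanSpace.damped_drift_apply, EuclideanSpace.damped_drift_apply]
  exact damped_drift_gap_pos (by positivity) hlw hφ hmin hmax hlt

theorem exists_strict_velocity_gap (N M : ℕ) (hN : 0 < N) (γ lx lw : ℝ)
    (hγ : 0 < γ) (hlx : 0 < lx) (hlw : 0 < lw)
    (x : Fin N → EuclideanSpace ℝ (Fin M))
    (φ : Fin N → Fin N → ℝ)
    (hφdef : ∀ i k, φ i k = (1 + ‖x i - x k‖ ^ 2) ^ (-(γ / 2)))
    (hmean : ∑ i, x i = 0)
    (hne : ∃ i j, x i ≠ x j) :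
    ∃ (i₀ j₀ : Fin N) (d : Fin M), i₀ ≠ j₀ ∧
      (∀ i, x i₀ d ≤ x i d) ∧ (∀ i, x i d ≤ x j₀ d) ∧
      0 < ((lx / N) • ∑ k, φ i₀ k • (x k - x i₀) - lw • x i₀) d
          - ((lx / N) • ∑ k, φ j₀ k • (x k - x j₀) - lw • x j₀) d :=
  exists_strict_velocity_gap_general N M γ lx lw hlx hlw x φ hφdef hne
end

section
/- Under the assumption that all v̂_i(t) are identical but not all x̂_i(t) are identical, the third derivative of E₂ at t satisfies E₂'''(t) = -(2λ_v/N) ∑_{i,j} φ̂_ij |v̂_i' - v̂_j'|² < 0. -/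
open scoped BigOperators RealInnerProductSpace

section helpers
variable {E : Type*} [NormedAddCommGroup E] [InnerProductSpace ℝ E]

lemma hasDerivAt_norm_sq' {f : ℝ → E} {f' : E} {s : ℝ} (h : HasDerivAt f f' s) :
    HasDerivAt (fun t => ‖f t‖ ^ 2) (2 * ⟪f s, f'⟫) s := by
  have h2 : HasDerivAt (fun t => ⟪f t, f t⟫) (⟪f s, f'⟫ + ⟪f', f s⟫) s := h.inner ℝ h
  simp only [real_inner_self_eq_norm_sq] at h2
  convert h2 using 1
  rw [real_inner_comm f' (f s)]; ring

lemma hasDerivAt_one_add_rpow {f : ℝ → E} {f' : E} {s p : ℝ} (h : HasDerivAt f f' s) :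
    HasDerivAt (fun t => (1 + ‖f t‖ ^ 2) ^ p)
      ((2 * ⟪f s, f'⟫) * p * (1 + ‖f s‖ ^ 2) ^ (p - 1)) s := by
  have hb : HasDerivAt (fun t => 1 + ‖f t‖ ^ 2) (2 * ⟪f s, f'⟫) s :=
    (hasDerivAt_norm_sq' h).const_add 1
  exact hb.rpow_const (Or.inl (by positivity))

lemma sum_swap_symm {ι : Type*} (u : Finset ι) (c : ι → ι → ℝ) (hc : ∀ i j, c i j = c j i)
    (h : ι → ι → ℝ) :
    ∑ i ∈ u, ∑ j ∈ u, c i j * h i j = ∑ i ∈ u, ∑ j ∈ u, c i j * h j i := by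
  rw [Finset.sum_comm]
  exact Finset.sum_congr rfl fun i _ => Finset.sum_congr rfl fun j _ => by rw [hc]

lemma sum_symm_inner {ι : Type*} (u : Finset ι) (c : ι → ι → ℝ) (hc : ∀ i j, c i j = c j i)
    (f g : ι → E) :
    2 * ∑ i ∈ u, ∑ j ∈ u, c i j * ⟪f i, g j - g i⟫ =
      -∑ i ∈ u, ∑ j ∈ u, c i j * ⟪f i - f j, g i - g j⟫ := by
  have h1 := sum_swap_symm u c hc (fun i j => ⟪f i, g j⟫)
  have h2 := sum_swap_symm u c hc (fun i j => ⟪f i, g i⟫)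
  have e1 : ∀ i j, c i j * ⟪f i - f j, g i - g j⟫
      = c i j * ⟪f i, g i⟫ - c i j * ⟪f i, g j⟫ - c i j * ⟪f j, g i⟫ + c i j * ⟪f j, g j⟫ := by
    intro i j; simp only [inner_sub_left, inner_sub_right]; ring
  have e2 : ∀ i j, c i j * ⟪f i, g j - g i⟫
      = c i j * ⟪f i, g j⟫ - c i j * ⟪f i, g i⟫ := by
    intro i j; simp only [inner_sub_right]; ring
  simp only [e1, e2, Finset.sum_add_distrib, Finset.sum_sub_distrib] at h1 h2 ⊢
  linear_combination h1 - h2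

lemma sum_symm_smul_zero {ι : Type*} (u : Finset ι) (c : ι → ι → ℝ)
    (hc : ∀ i j, c i j = c j i) (h : ι → E) :
    ∑ i ∈ u, ∑ j ∈ u, c i j • (h j - h i) = 0 := by
  have hs : ∑ i ∈ u, ∑ j ∈ u, c i j • h j = ∑ i ∈ u, ∑ j ∈ u, c i j • h i := by
    rw [Finset.sum_comm]
    exact Finset.sum_congr rfl fun i _ => Finset.sum_congr rfl fun j _ => by rw [hc]
  simp only [smul_sub, Finset.sum_sub_distrib, hs, sub_self]

end helpers

set_option maxHeartbeats 4000000 in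
theorem E2_third_deriv_neg (N M : ℕ) (hN : 0 < N) (γ lx lv lw : ℝ)
    (hγ : 0 < γ) (hlx : 0 < lx) (hlv : 0 < lv) (hlw : 0 < lw)
    (x v : Fin N → ℝ → EuclideanSpace ℝ (Fin M))
    (φ : Fin N → Fin N → ℝ → ℝ)
    (hφdef : ∀ i j s, φ i j s = (1 + ‖x i s - x j s‖ ^ 2) ^ (-(γ / 2)))
    (hx : ∀ i (s : ℝ), HasDerivAt (x i) (v i s) s)
    (hv : ∀ i (s : ℝ), HasDerivAt (v i)
      ((lx / N) • ∑ j, φ i j s • (x j s - x i s)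
        + (lv / N) • ∑ j, φ i j s • (v j s - v i s)
        - lw • x i s) s)
    (hxmean : ∀ s : ℝ, ∑ i, x i s = 0) (hvmean : ∀ s : ℝ, ∑ i, v i s = 0)
    (t₀ : ℝ)
    (hveq : ∀ i j, v i t₀ = v j t₀)
    (hxne : ∃ i j, x i t₀ ≠ x j t₀) :
    iteratedDeriv 3
        (fun s => lw * ∑ i, ‖x i s‖ ^ 2 + ∑ i, ‖v i s‖ ^ 2
          + (lx / (if γ = 2 then 2 else |2 - γ|)) *
            ((1 / (N : ℝ)) * ∑ i, ∑ j,
              (if γ < 2 then (1 + ‖x i s - x j s‖ ^ 2) ^ (-((γ - 2) / 2)) - 1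
               else if γ = 2 then Real.log (1 + ‖x i s - x j s‖ ^ 2)
               else 1 - (1 + ‖x i s - x j s‖ ^ 2) ^ (-((γ - 2) / 2))))) t₀
      = -((2 * lv / (N : ℝ)) * ∑ i, ∑ j, φ i j t₀ *
          ‖((lx / N) • ∑ k, φ i k t₀ • (x k t₀ - x i t₀)
              + (lv / N) • ∑ k, φ i k t₀ • (v k t₀ - v i t₀) - lw • x i t₀)
            - ((lx / N) • ∑ k, φ j k t₀ • (x k t₀ - x j t₀)
              + (lv / N) • ∑ k, φ j k t₀ • (v k t₀ - v j t₀) - lw • x j t₀)‖ ^ 2)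
    ∧ -((2 * lv / (N : ℝ)) * ∑ i, ∑ j, φ i j t₀ *
          ‖((lx / N) • ∑ k, φ i k t₀ • (x k t₀ - x i t₀)
              + (lv / N) • ∑ k, φ i k t₀ • (v k t₀ - v i t₀) - lw • x i t₀)
            - ((lx / N) • ∑ k, φ j k t₀ • (x k t₀ - x j t₀)
              + (lv / N) • ∑ k, φ j k t₀ • (v k t₀ - v j t₀) - lw • x j t₀)‖ ^ 2) < 0 := by
  classical
  have hNR : (0:ℝ) < (N:ℝ) := by exact_mod_cast hN
  have hNne : (N:ℝ) ≠ 0 := ne_of_gt hNR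
  set a : Fin N → ℝ → EuclideanSpace ℝ (Fin M) := fun i s =>
    (lx / N) • ∑ j, φ i j s • (x j s - x i s)
      + (lv / N) • ∑ j, φ i j s • (v j s - v i s) - lw • x i s with ha
  have hva : ∀ i (s : ℝ), HasDerivAt (v i) (a i s) s := hv
  have hφsymm : ∀ (s : ℝ) (i j : Fin N), φ i j s = φ j i s := by
    intro s i j; rw [hφdef, hφdef, norm_sub_rev]
  have hφpos : ∀ (i j : Fin N) (s : ℝ), 0 < φ i j s := by
    intro i j s; rw [hφdef]; positivity
  have hΔx : ∀ (i j : Fin N) (s : ℝ),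
      HasDerivAt (fun t => x i t - x j t) (v i s - v j s) s :=
    fun i j s => (hx i s).sub (hx j s)
  have hΔv : ∀ (i j : Fin N) (s : ℝ),
      HasDerivAt (fun t => v i t - v j t) (a i s - a j s) s :=
    fun i j s => (hva i s).sub (hva j s)
  set φd : Fin N → Fin N → ℝ → ℝ := fun i j s =>
    (2 * ⟪x i s - x j s, v i s - v j s⟫) * (-(γ / 2))
      * (1 + ‖x i s - x j s‖ ^ 2) ^ (-(γ / 2) - 1) with hφd_def
  have hφd : ∀ (i j : Fin N) (s : ℝ), HasDerivAt (φ i j) (φd i j s) s := by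
    intro i j s
    have he : φ i j = fun t => (1 + ‖x i t - x j t‖ ^ 2) ^ (-(γ / 2)) :=
      funext (hφdef i j)
    rw [he]
    exact hasDerivAt_one_add_rpow (hΔx i j s)
  set ad : Fin N → ℝ → EuclideanSpace ℝ (Fin M) := fun i s =>
    (lx / N) • ∑ j, (φ i j s • (v j s - v i s) + φd i j s • (x j s - x i s))
      + (lv / N) • ∑ j, (φ i j s • (a j s - a i s) + φd i j s • (v j s - v i s))
      - lw • v i s with had_def
  have hax : ∀ (i : Fin N) (s : ℝ), HasDerivAt (a i) (ad i s) s := by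
    intro i s
    have h1 : HasDerivAt (fun t => (lx / N) • ∑ j, φ i j t • (x j t - x i t))
        ((lx / N) • ∑ j, (φ i j s • (v j s - v i s) + φd i j s • (x j s - x i s))) s :=
      (HasDerivAt.fun_sum fun j _ => (hφd i j s).smul (hΔx j i s)).const_smul (lx / N)
    have h2 : HasDerivAt (fun t => (lv / N) • ∑ j, φ i j t • (v j t - v i t))
        ((lv / N) • ∑ j, (φ i j s • (a j s - a i s) + φd i j s • (v j s - v i s))) s :=
      (HasDerivAt.fun_sum fun j _ => (hφd i j s).smul (hΔv j i s)).const_smul (lv / N)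
    have h3 : HasDerivAt (fun t => lw • x i t) (lw • v i s) s := (hx i s).const_smul lw
    exact ((h1.add h2).sub h3)
  have hP3 : ∀ s : ℝ, HasDerivAt (fun t => (lx / (if γ = 2 then 2 else |2 - γ|)) *
        ((1 / (N : ℝ)) * ∑ i, ∑ j,
          (if γ < 2 then (1 + ‖x i t - x j t‖ ^ 2) ^ (-((γ - 2) / 2)) - 1
           else if γ = 2 then Real.log (1 + ‖x i t - x j t‖ ^ 2)
           else 1 - (1 + ‖x i t - x j t‖ ^ 2) ^ (-((γ - 2) / 2)))))
      ((lx / ↑N) * ∑ i, ∑ j, φ i j s * ⟪x i s - x j s, v i s - v j s⟫) s := by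
    intro s
    rcases lt_trichotomy γ 2 with hγ2 | hγ2 | hγ2
    · have hne : γ ≠ 2 := ne_of_lt hγ2
      have hpos : (0:ℝ) < 2 - γ := by linarith
      have hne2 : (2:ℝ) - γ ≠ 0 := ne_of_gt hpos
      simp only [if_pos hγ2, if_neg hne, abs_of_pos hpos]
      have base : ∀ i j : Fin N, HasDerivAt
          (fun t => (1 + ‖x i t - x j t‖ ^ 2) ^ (-((γ - 2) / 2)) - 1)
          ((2 * ⟪x i s - x j s, v i s - v j s⟫) * (-((γ - 2) / 2)) *
            (1 + ‖x i s - x j s‖ ^ 2) ^ (-((γ - 2) / 2) - 1)) s :=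
        fun i j => (hasDerivAt_one_add_rpow (hΔx i j s)).sub_const 1
      have H := ((HasDerivAt.fun_sum (u := Finset.univ)
          fun i _ => HasDerivAt.fun_sum (u := Finset.univ) fun j _ => base i j).const_mul
          (1 / (N : ℝ))).const_mul (lx / (2 - γ))
      convert! H using 1
      simp only [hφdef, Finset.mul_sum]
      refine Finset.sum_congr rfl fun i _ => Finset.sum_congr rfl fun j _ => ?_
      rw [show -((γ - 2) / 2) - 1 = -(γ / 2) by ring]
      set ip := ⟪x i s - x j s, v i s - v j s⟫ with hip
      set R := (1 + ‖x i s - x j s‖ ^ 2) ^ (-(γ / 2)) with hR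
      field_simp
      ring
    · subst hγ2
      simp only [lt_self_iff_false, if_false, if_true]
      have base : ∀ i j : Fin N, HasDerivAt
          (fun t => Real.log (1 + ‖x i t - x j t‖ ^ 2))
          ((2 * ⟪x i s - x j s, v i s - v j s⟫) / (1 + ‖x i s - x j s‖ ^ 2)) s := by
        intro i j
        exact ((hasDerivAt_norm_sq' (hΔx i j s)).const_add 1).log (by positivity)
      have H := ((HasDerivAt.fun_sum (u := Finset.univ)
          fun i _ => HasDerivAt.fun_sum (u := Finset.univ) fun j _ => base i j).const_mul
          (1 / (N : ℝ))).const_mul (lx / 2)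
      convert! H using 1
      simp only [hφdef, Finset.mul_sum]
      refine Finset.sum_congr rfl fun i _ => Finset.sum_congr rfl fun j _ => ?_
      rw [show (-(2 / 2) : ℝ) = -1 by norm_num, Real.rpow_neg_one]
      have h1 : (1:ℝ) + ‖x i s - x j s‖ ^ 2 ≠ 0 := by positivity
      set ip := ⟪x i s - x j s, v i s - v j s⟫ with hip
      set q := (1:ℝ) + ‖x i s - x j s‖ ^ 2 with hq
      field_simp
    · have hne : γ ≠ 2 := ne_of_gt hγ2
      have hneg : (2:ℝ) - γ < 0 := by linarith
      have hne2 : (2:ℝ) - γ ≠ 0 := ne_of_lt hneg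
      have hnlt : ¬ γ < 2 := not_lt_of_gt hγ2
      simp only [if_neg hne, if_neg hnlt, abs_of_neg hneg]
      have base : ∀ i j : Fin N, HasDerivAt
          (fun t => 1 - (1 + ‖x i t - x j t‖ ^ 2) ^ (-((γ - 2) / 2)))
          (-((2 * ⟪x i s - x j s, v i s - v j s⟫) * (-((γ - 2) / 2)) *
            (1 + ‖x i s - x j s‖ ^ 2) ^ (-((γ - 2) / 2) - 1))) s :=
        fun i j => (hasDerivAt_one_add_rpow (hΔx i j s)).const_sub 1
      have H := ((HasDerivAt.fun_sum (u := Finset.univ)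
          fun i _ => HasDerivAt.fun_sum (u := Finset.univ) fun j _ => base i j).const_mul
          (1 / (N : ℝ))).const_mul (lx / -(2 - γ))
      convert! H using 1
      simp only [hφdef, Finset.mul_sum]
      refine Finset.sum_congr rfl fun i _ => Finset.sum_congr rfl fun j _ => ?_
      rw [show -((γ - 2) / 2) - 1 = -(γ / 2) by ring]
      set ip := ⟪x i s - x j s, v i s - v j s⟫ with hip
      set R := (1 + ‖x i s - x j s‖ ^ 2) ^ (-(γ / 2)) with hR
      have hd : γ * (N:ℝ) * 2 - (N:ℝ) * 4 ≠ 0 := by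
        have he : γ * (N:ℝ) * 2 - (N:ℝ) * 4 = (2 * (N:ℝ)) * (γ - 2) := by ring
        rw [he]
        exact mul_ne_zero (by positivity) (sub_ne_zero.mpr hne)
      field_simp [hd]
      ring
  have hinner_a : ∀ (i : Fin N) (s : ℝ), ⟪v i s, a i s⟫
      = (lx / ↑N) * ∑ j, φ i j s * ⟪v i s, x j s - x i s⟫
        + (lv / ↑N) * ∑ j, φ i j s * ⟪v i s, v j s - v i s⟫
        - lw * ⟪v i s, x i s⟫ := by
    intro i s
    show ⟪v i s, (lx / ↑N) • ∑ j, φ i j s • (x j s - x i s)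
        + (lv / ↑N) • ∑ j, φ i j s • (v j s - v i s) - lw • x i s⟫ = _
    rw [inner_sub_right, inner_add_right, real_inner_smul_right, real_inner_smul_right,
      real_inner_smul_right, inner_sum, inner_sum]
    simp only [real_inner_smul_right]
  have key1 : ∀ s : ℝ, HasDerivAt (fun t => lw * ∑ i, ‖x i t‖ ^ 2 + ∑ i, ‖v i t‖ ^ 2
      + (lx / (if γ = 2 then 2 else |2 - γ|)) * ((1 / (N : ℝ)) * ∑ i, ∑ j,
        (if γ < 2 then (1 + ‖x i t - x j t‖ ^ 2) ^ (-((γ - 2) / 2)) - 1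
         else if γ = 2 then Real.log (1 + ‖x i t - x j t‖ ^ 2)
         else 1 - (1 + ‖x i t - x j t‖ ^ 2) ^ (-((γ - 2) / 2)))))
      (-((lv / ↑N) * ∑ i, ∑ j, φ i j s * ‖v i s - v j s‖ ^ 2)) s := by
    intro s
    have hP1 : HasDerivAt (fun t => lw * ∑ i, ‖x i t‖ ^ 2)
        (lw * ∑ i, 2 * ⟪x i s, v i s⟫) s :=
      (HasDerivAt.fun_sum (u := Finset.univ) fun i _ => hasDerivAt_norm_sq' (hx i s)).const_mul lw
    have hP2 : HasDerivAt (fun t => ∑ i, ‖v i t‖ ^ 2)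
        (∑ i, 2 * ⟪v i s, a i s⟫) s :=
      HasDerivAt.fun_sum (u := Finset.univ) fun i _ => hasDerivAt_norm_sq' (hva i s)
    have H := (hP1.add hP2).add (hP3 s)
    convert! H using 1
    have hcomm : ∑ i, 2 * ⟪x i s, v i s⟫ = 2 * ∑ i, ⟪v i s, x i s⟫ := by
      rw [Finset.mul_sum]; exact Finset.sum_congr rfl fun i _ => by rw [real_inner_comm]
    have hA : ∑ i, 2 * ⟪v i s, a i s⟫
        = 2 * (lx / ↑N) * ∑ i, ∑ j, φ i j s * ⟪v i s, x j s - x i s⟫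
          + 2 * (lv / ↑N) * ∑ i, ∑ j, φ i j s * ⟪v i s, v j s - v i s⟫
          - 2 * lw * ∑ i, ⟪v i s, x i s⟫ := by
      rw [Finset.mul_sum, Finset.mul_sum, Finset.mul_sum, ← Finset.sum_add_distrib,
        ← Finset.sum_sub_distrib]
      exact Finset.sum_congr rfl fun i _ => by rw [hinner_a]; ring
    have hs1 : 2 * ∑ i, ∑ j, φ i j s * ⟪v i s, x j s - x i s⟫
        = -∑ i, ∑ j, φ i j s * ⟪v i s - v j s, x i s - x j s⟫ :=
      sum_symm_inner Finset.univ (fun i j => φ i j s) (fun i j => hφsymm s i j)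
        (fun i => v i s) (fun i => x i s)
    have hs2 : 2 * ∑ i, ∑ j, φ i j s * ⟪v i s, v j s - v i s⟫
        = -∑ i, ∑ j, φ i j s * ⟪v i s - v j s, v i s - v j s⟫ :=
      sum_symm_inner Finset.univ (fun i j => φ i j s) (fun i j => hφsymm s i j)
        (fun i => v i s) (fun i => v i s)
    have hc1 : ∑ i, ∑ j, φ i j s * ⟪v i s - v j s, x i s - x j s⟫
        = ∑ i, ∑ j, φ i j s * ⟪x i s - x j s, v i s - v j s⟫ :=
      Finset.sum_congr rfl fun i _ => Finset.sum_congr rfl fun j _ => by rw [real_inner_comm]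
    have hc2 : ∑ i, ∑ j, φ i j s * ⟪v i s - v j s, v i s - v j s⟫
        = ∑ i, ∑ j, φ i j s * ‖v i s - v j s‖ ^ 2 :=
      Finset.sum_congr rfl fun i _ => Finset.sum_congr rfl fun j _ => by
        rw [real_inner_self_eq_norm_sq]
    rw [hcomm, hA]
    linear_combination (-(lx/↑N)) * hs1 + (lx/↑N) * hc1 + (-(lv/↑N)) * hs2 + (lv/↑N) * hc2
  have key2 : ∀ s : ℝ, HasDerivAt
      (fun t => -((lv / ↑N) * ∑ i, ∑ j, φ i j t * ‖v i t - v j t‖ ^ 2))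
      (-((lv / ↑N) * ∑ i, ∑ j, (φd i j s * ‖v i s - v j s‖ ^ 2
        + φ i j s * (2 * ⟪v i s - v j s, a i s - a j s⟫)))) s := by
    intro s
    exact (((HasDerivAt.fun_sum (u := Finset.univ) fun i _ => HasDerivAt.fun_sum (u := Finset.univ)
      fun j _ => (hφd i j s).mul (hasDerivAt_norm_sq' (hΔv i j s))).const_mul (lv / ↑N)).neg)
  have hterm : ∀ i j : Fin N, HasDerivAt
      (fun s => φd i j s * ‖v i s - v j s‖ ^ 2
        + φ i j s * (2 * ⟪v i s - v j s, a i s - a j s⟫))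
      (φ i j t₀ * (2 * ‖a i t₀ - a j t₀‖ ^ 2)) t₀ := by
    intro i j
    have hv0 : v i t₀ - v j t₀ = 0 := sub_eq_zero_of_eq (hveq i j)
    have h_ip : HasDerivAt (fun s => ⟪x i s - x j s, v i s - v j s⟫)
        (⟪x i t₀ - x j t₀, a i t₀ - a j t₀⟫ + ⟪v i t₀ - v j t₀, v i t₀ - v j t₀⟫) t₀ :=
      (hΔx i j t₀).inner ℝ (hΔv i j t₀)
    have h_r := hasDerivAt_one_add_rpow (p := -(γ / 2) - 1) (hΔx i j t₀)
    have hφdd := ((h_ip.const_mul 2).mul_const (-(γ / 2))).mul h_r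
    have hq := hasDerivAt_norm_sq' (hΔv i j t₀)
    have hw := ((hΔv i j t₀).inner ℝ ((hax i t₀).sub (hax j t₀))).const_mul 2
    have H := (hφdd.mul hq).add ((hφd i j t₀).mul hw)
    convert! H using 1
    rw [hv0]
    simp only [inner_zero_left, inner_zero_right, norm_zero, zero_pow, mul_zero, zero_mul,
      zero_add, add_zero, real_inner_self_eq_norm_sq, ne_eq, OfNat.ofNat_ne_zero,
      not_false_eq_true, Pi.sub_apply]
  have key3 : HasDerivAt
      (fun s => -((lv / ↑N) * ∑ i, ∑ j, (φd i j s * ‖v i s - v j s‖ ^ 2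
        + φ i j s * (2 * ⟪v i s - v j s, a i s - a j s⟫))))
      (-((2 * lv / ↑N) * ∑ i, ∑ j, φ i j t₀ * ‖a i t₀ - a j t₀‖ ^ 2)) t₀ := by
    have H := ((HasDerivAt.fun_sum (u := Finset.univ) fun i _ => HasDerivAt.fun_sum (u := Finset.univ)
      fun j _ => hterm i j).const_mul (lv / ↑N)).neg
    convert! H using 2
    simp only [Finset.mul_sum]
    refine Finset.sum_congr rfl fun i _ => Finset.sum_congr rfl fun j _ => ?_
    ring
  constructor
  · have hd1 : deriv (fun s => lw * ∑ i, ‖x i s‖ ^ 2 + ∑ i, ‖v i s‖ ^ 2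
        + (lx / (if γ = 2 then 2 else |2 - γ|)) * ((1 / (N : ℝ)) * ∑ i, ∑ j,
          (if γ < 2 then (1 + ‖x i s - x j s‖ ^ 2) ^ (-((γ - 2) / 2)) - 1
           else if γ = 2 then Real.log (1 + ‖x i s - x j s‖ ^ 2)
           else 1 - (1 + ‖x i s - x j s‖ ^ 2) ^ (-((γ - 2) / 2)))))
        = fun s => -((lv / ↑N) * ∑ i, ∑ j, φ i j s * ‖v i s - v j s‖ ^ 2) :=
      funext fun s => (key1 s).deriv
    have hd2 : deriv (fun t => -((lv / ↑N) * ∑ i, ∑ j, φ i j t * ‖v i t - v j t‖ ^ 2))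
        = fun s => -((lv / ↑N) * ∑ i, ∑ j, (φd i j s * ‖v i s - v j s‖ ^ 2
          + φ i j s * (2 * ⟪v i s - v j s, a i s - a j s⟫))) :=
      funext fun s => (key2 s).deriv
    rw [show (3:ℕ) = 2 + 1 from rfl, iteratedDeriv_succ,
      show (2:ℕ) = 1 + 1 from rfl, iteratedDeriv_succ, iteratedDeriv_one, hd1, hd2]
    exact key3.deriv
  · show -(2 * lv / ↑N * ∑ i, ∑ j, φ i j t₀ * ‖a i t₀ - a j t₀‖ ^ 2) < 0
    rw [neg_lt_zero]
    have hnn : ∀ i ∈ (Finset.univ : Finset (Fin N)),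
        (0:ℝ) ≤ ∑ j, φ i j t₀ * ‖a i t₀ - a j t₀‖ ^ 2 := fun i _ =>
      Finset.sum_nonneg fun j _ => mul_nonneg (hφpos i j t₀).le (by positivity)
    have hSpos : 0 < ∑ i, ∑ j, φ i j t₀ * ‖a i t₀ - a j t₀‖ ^ 2 := by
      rcases lt_or_eq_of_le (Finset.sum_nonneg hnn) with h | h
      · exact h
      exfalso
      have hall : ∀ i j : Fin N, a i t₀ = a j t₀ := by
        intro i j
        have h1 := (Finset.sum_eq_zero_iff_of_nonneg hnn).1 h.symm i (Finset.mem_univ i)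
        have h2 := (Finset.sum_eq_zero_iff_of_nonneg
          (fun j _ => mul_nonneg (hφpos i j t₀).le (by positivity))).1 h1 j (Finset.mem_univ j)
        rcases mul_eq_zero.1 h2 with h3 | h3
        · exact absurd h3 (ne_of_gt (hφpos i j t₀))
        · have := pow_eq_zero_iff (n := 2) (by norm_num) |>.1 h3
          rw [norm_eq_zero, sub_eq_zero] at this
          exact this
      have hB : ∀ i : Fin N, ∑ j, φ i j t₀ • (v j t₀ - v i t₀) = 0 := fun i =>
        Finset.sum_eq_zero fun j _ => by rw [sub_eq_zero_of_eq (hveq j i), smul_zero]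
      have hsum0 : ∑ i, a i t₀ = 0 := by
        show ∑ i, ((lx / ↑N) • ∑ j, φ i j t₀ • (x j t₀ - x i t₀)
          + (lv / ↑N) • ∑ j, φ i j t₀ • (v j t₀ - v i t₀) - lw • x i t₀) = 0
        rw [Finset.sum_sub_distrib, Finset.sum_add_distrib, ← Finset.smul_sum, ← Finset.smul_sum,
          ← Finset.smul_sum, sum_symm_smul_zero _ _ (fun i j => hφsymm t₀ i j),
          hxmean t₀]
        simp [Finset.sum_congr rfl fun i (_ : i ∈ Finset.univ) => hB i]
      have ha0 : ∀ i : Fin N, a i t₀ = 0 := by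
        intro i
        have hcongr : ∑ k : Fin N, a k t₀ = (N : ℕ) • a i t₀ := by
          rw [Finset.sum_congr rfl fun k _ => hall k i, Finset.sum_const, Finset.card_univ,
            Fintype.card_fin]
        rw [hcongr, ← Nat.cast_smul_eq_nsmul ℝ] at hsum0
        rcases smul_eq_zero.1 hsum0 with h' | h'
        · exact absurd h' hNne
        · exact h'
      have hkey : ∀ i : Fin N,
          (lx / ↑N) * ∑ j, φ i j t₀ * ⟪x i t₀, x j t₀ - x i t₀⟫ = lw * ‖x i t₀‖ ^ 2 := by
        intro i
        have h1 : (lx / ↑N) • ∑ j, φ i j t₀ • (x j t₀ - x i t₀) = lw • x i t₀ := by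
          have h0 : (lx / ↑N) • ∑ j, φ i j t₀ • (x j t₀ - x i t₀)
              + (lv / ↑N) • ∑ j, φ i j t₀ • (v j t₀ - v i t₀) - lw • x i t₀ = 0 := ha0 i
          rw [hB i, smul_zero, add_zero, sub_eq_zero] at h0
          exact h0
        have h2 : ⟪x i t₀, (lx / ↑N) • ∑ j, φ i j t₀ • (x j t₀ - x i t₀)⟫
            = ⟪x i t₀, lw • x i t₀⟫ := by rw [h1]
        rw [real_inner_smul_right, real_inner_smul_right, inner_sum,
          real_inner_self_eq_norm_sq] at h2
        simpa only [real_inner_smul_right] using h2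
      have hsumkey : (lx / ↑N) * ∑ i, ∑ j, φ i j t₀ * ⟪x i t₀, x j t₀ - x i t₀⟫
          = lw * ∑ i, ‖x i t₀‖ ^ 2 := by
        rw [Finset.mul_sum, Finset.mul_sum]
        exact Finset.sum_congr rfl fun i _ => by rw [← hkey i, Finset.mul_sum]
      have hs3 : 2 * ∑ i, ∑ j, φ i j t₀ * ⟪x i t₀, x j t₀ - x i t₀⟫
          = -∑ i, ∑ j, φ i j t₀ * ⟪x i t₀ - x j t₀, x i t₀ - x j t₀⟫ :=
        sum_symm_inner Finset.univ (fun i j => φ i j t₀) (fun i j => hφsymm t₀ i j)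
          (fun i => x i t₀) (fun i => x i t₀)
      have h4 : (0:ℝ) ≤ ∑ i, ∑ j, φ i j t₀ * ⟪x i t₀ - x j t₀, x i t₀ - x j t₀⟫ :=
        Finset.sum_nonneg fun i _ => Finset.sum_nonneg fun j _ =>
          mul_nonneg (hφpos i j t₀).le real_inner_self_nonneg
      have hxpos : 0 < ∑ i, ‖x i t₀‖ ^ 2 := by
        obtain ⟨i, j, hij⟩ := hxne
        have hne0 : x i t₀ ≠ 0 ∨ x j t₀ ≠ 0 := by
          by_contra hcc
          push_neg at hcc
          exact hij (hcc.1.trans hcc.2.symm)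
        rcases hne0 with h' | h'
        · exact Finset.sum_pos' (fun k _ => by positivity)
            ⟨i, Finset.mem_univ i, pow_pos (norm_pos_iff.mpr h') 2⟩
        · exact Finset.sum_pos' (fun k _ => by positivity)
            ⟨j, Finset.mem_univ j, pow_pos (norm_pos_iff.mpr h') 2⟩
      have hfin : lw * ∑ i, ‖x i t₀‖ ^ 2 ≤ 0 := by
        rw [← hsumkey]
        have hnp : ∑ i, ∑ j, φ i j t₀ * ⟪x i t₀, x j t₀ - x i t₀⟫ ≤ 0 := by linarith
        exact mul_nonpos_of_nonneg_of_nonpos (by positivity) hnp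
      nlinarith [mul_pos hlw hxpos]
    have hcoef : (0:ℝ) < 2 * lv / ↑N := by positivity
    exact mul_pos hcoef hSpos
end
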